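/- arXiv:1406.6121 — 4 statements merged into one kernel-verified Lean document; each statement's English description precedes it below -/
import Mathlib

section
/- Let a(ξ) ∈ ℤ_p[ξ_1,…,ξ_N] be an elliptic polynomial of degree d, i.e. a is homogeneous of degree d and a(ξ) = 0 only for ξ = 0. Then there exist positive real constants C₀ = C₀(a) and C₁ = C₁(a) such that C₀‖ξ‖_p^d ≤ |a(ξ)|_p ≤ C₁‖ξ‖_p^d for every ξ ∈ ℚ_p^N. -/
open MeasureTheory Complex Filter

section Preamble

variable (p : ℕ) [Fact p.Prime]

open Classical in
/-- The `p`-adic fractional part `{y}_p ∈ ℚ` of `y ∈ ℚ_p`. -/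
noncomputable def padicFrac (y : ℚ_[p]) : ℚ :=
  if h : ∃ n : ℕ, ‖y * (p : ℚ_[p]) ^ n‖ ≤ 1 then
    (PadicInt.appr (⟨y * (p : ℚ_[p]) ^ Nat.find h, Nat.find_spec h⟩ : ℤ_[p]) (Nat.find h) : ℚ)
      / (p : ℚ) ^ (Nat.find h)
  else 0

/-- The standard additive character `χ_p(y) = exp(2 π i {y}_p)` of `ℚ_p`. -/
noncomputable def padicChar (y : ℚ_[p]) : ℂ :=
  Complex.exp (2 * Real.pi * Complex.I * (padicFrac p y : ℂ))

noncomputable instance : MeasurableSpace ℚ_[p] := borel _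
instance : BorelSpace ℚ_[p] := ⟨rfl⟩

variable (N : ℕ)

/-- The Haar measure `d^N x` on `ℚ_p^N`, normalized so that `ℤ_p^N` (the closed unit
ball) has measure `1`. -/
noncomputable def QpHaar : Measure (Fin N → ℚ_[p]) :=
  Measure.addHaarMeasure
    ⟨⟨Metric.closedBall 0 1, isCompact_closedBall 0 1⟩,
      Set.Nonempty.mono Metric.ball_subset_interior_closedBall
        (Metric.nonempty_ball.mpr one_pos)⟩

/-- The Fourier transform `Ff(ξ) = ∫ χ_p(-ξ·x) f(x) d^N x` on `ℚ_p^N`. -/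
noncomputable def QpFT (f : (Fin N → ℚ_[p]) → ℂ) (ξ : Fin N → ℚ_[p]) : ℂ :=
  ∫ x, padicChar p (-(∑ j, ξ j * x j)) * f x ∂(QpHaar p N)

/-- Evaluation at `ξ ∈ ℚ_p^N` of a polynomial with coefficients in `ℤ_p`. -/
noncomputable def evalPoly (a : MvPolynomial (Fin N) ℤ_[p]) (ξ : Fin N → ℚ_[p]) : ℚ_[p] :=
  MvPolynomial.eval ξ (MvPolynomial.map (PadicInt.Coe.ringHom (p := p)) a)

/-- `a` is an elliptic polynomial of degree `d`: homogeneous of degree `d` and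
`a(ξ) = 0 ↔ ξ = 0`. -/
def IsElliptic (a : MvPolynomial (Fin N) ℤ_[p]) (d : ℕ) : Prop :=
  0 < d ∧ MvPolynomial.IsHomogeneous a d ∧
    ∀ ξ : Fin N → ℚ_[p], evalPoly p N a ξ = 0 ↔ ξ = 0

/-- The `p`-adic heat kernel `Γ(t,x) = ∫ χ_p(x·ξ) e^{-t |a(ξ)|_p^β} d^N ξ`. -/
noncomputable def heatKer (a : MvPolynomial (Fin N) ℤ_[p]) (β t : ℝ)
    (x : Fin N → ℚ_[p]) : ℂ :=
  ∫ ξ, padicChar p (∑ j, x j * ξ j) *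
    (Real.exp (-(t * ‖evalPoly p N a ξ‖ ^ β)) : ℝ) ∂(QpHaar p N)

/-- Bruhat--Schwartz test functions: locally constant with compact support. -/
def IsTestFn (f : (Fin N → ℚ_[p]) → ℂ) : Prop :=
  IsLocallyConstant f ∧ HasCompactSupport f

/-- The Bruhat--Schwartz space `D(ℚ_p^N)` as a `ℂ`-subspace of all functions. -/
noncomputable def BSspace : Submodule ℂ ((Fin N → ℚ_[p]) → ℂ) where
  carrier := {f | IsLocallyConstant f ∧ HasCompactSupport f}
  add_mem' hf hg := ⟨hf.1.add hg.1, hf.2.add hg.2⟩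
  zero_mem' := ⟨IsLocallyConstant.const 0, by
    simp [HasCompactSupport, tsupport, Function.support, isCompact_empty]⟩
  smul_mem' c f hf := by
    refine ⟨?_, ?_⟩
    · show IsLocallyConstant fun x => c • f x
      exact hf.1.comp (c • ·)
    · show HasCompactSupport fun x => c • f x
      exact hf.2.comp_left (g := (c • ·)) (smul_zero c)

open Classical in
/-- The pairing of a distribution `F ∈ D'(ℚ_p^N)` with a function which is
(known to be) a test function. -/
noncomputable def pairingD (F : BSspace p N →ₗ[ℂ] ℂ) (g : (Fin N → ℚ_[p]) → ℂ) : ℂ :=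
  if h : IsTestFn p N g then F ⟨g, h⟩ else 0

/-- Convolution `(f ∗ g)(x) = ∫ f(y) g(x − y) d^N y` on `ℚ_p^N`. -/
noncomputable def QpConv (f g : (Fin N → ℚ_[p]) → ℂ) (x : Fin N → ℚ_[p]) : ℂ :=
  ∫ y, f y * g (x - y) ∂(QpHaar p N)

open Classical in
/-- The Bessel potential `K_α` on `ℚ_p^N`. -/
noncomputable def besselK (α : ℝ) (x : Fin N → ℚ_[p]) : ℝ :=
  if x = 0 then 0
  else if ‖x‖ ≤ 1 then
    if α = N then (1 - (p : ℝ) ^ (-(N : ℝ))) * Real.logb p ((p : ℝ) / ‖x‖)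
    else ((1 - (p : ℝ) ^ (-α)) / (1 - (p : ℝ) ^ (α - (N : ℝ)))) *
      (‖x‖ ^ (α - (N : ℝ)) - (p : ℝ) ^ (α - (N : ℝ)))
  else 0

/-- `I₀(t,x) = (Γ(t)∗u₀)(x)` for `t > 0`, and `I₀(0,x) = u₀(x)`. -/
noncomputable def I0 (a : MvPolynomial (Fin N) ℤ_[p]) (β : ℝ) (u₀ : (Fin N → ℚ_[p]) → ℝ)
    (t : ℝ) (x : Fin N → ℚ_[p]) : ℂ :=
  if t = 0 then (u₀ x : ℂ)
  else ∫ y, heatKer p N a β t (x - y) * (u₀ y : ℂ) ∂(QpHaar p N)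

/-- The Hilbert space `U`: the completion of `D_ℝ(ℚ_p^N)` with respect to the
semi-inner product `⟨φ,ψ⟩_U = ∫ Fφ conj(Fψ) dμ`, realized concretely as the closure
in `L²(μ;ℂ)` of the space of Fourier transforms of real-valued test functions. -/
noncomputable def Uspace (μ : Measure (Fin N → ℚ_[p])) : Submodule ℝ (Lp ℂ 2 μ) :=
  (Submodule.span ℝ {g : Lp ℂ 2 μ | ∃ φ : (Fin N → ℚ_[p]) → ℝ,
      IsLocallyConstant φ ∧ HasCompactSupport φ ∧
      (g : (Fin N → ℚ_[p]) → ℂ) =ᵐ[μ] QpFT p N fun x => (φ x : ℂ)}).topologicalClosure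

end Preamble

/-! By homogeneity `a(ξ) = c ^ d a(c⁻¹ ξ)` where `|c|_p = ‖ξ‖_p` is a coordinate of largest norm,
so `|a(ξ)|_p / ‖ξ‖_p ^ d` only takes the values of `|a|_p` on the unit sphere of `ℚ_p^N`. That sphere
is compact and `a` has no zero on it, so these values lie between two positive constants. -/

namespace MvPolynomial.IsHomogeneous

variable {σ R : Type*} [CommSemiring R] {φ : MvPolynomial σ R} {n : ℕ}

theorem eval_smul (hφ : φ.IsHomogeneous n) (c : R) (x : σ → R) :
    eval (c • x) φ = c ^ n * eval x φ := by
  rw [eval_eq, eval_eq, Finset.mul_sum]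
  refine Finset.sum_congr rfl fun m hm => ?_
  have hdeg : m.degree = n := by
    rw [Finsupp.degree_eq_weight_one]
    exact hφ (mem_support_iff.mp hm)
  rw [← hdeg, Finsupp.degree_apply]
  simp_rw [Pi.smul_apply, smul_eq_mul, mul_pow]
  rw [Finset.prod_mul_distrib, Finset.prod_pow_eq_pow_sum]
  ring

theorem eval_zero_of_pos (hφ : φ.IsHomogeneous n) (hn : 0 < n) : eval 0 φ = 0 := by
  simpa [zero_pow hn.ne'] using hφ.eval_smul 0 0

end MvPolynomial.IsHomogeneous

theorem Pi.exists_eq_smul_mem_sphere_of_ne_zero {ι 𝕜 : Type*} [Fintype ι] [NormedField 𝕜]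
    {ξ : ι → 𝕜} (hξ : ξ ≠ 0) :
    ∃ c : 𝕜, ∃ η ∈ Metric.sphere (0 : ι → 𝕜) 1, ‖c‖ = ‖ξ‖ ∧ ξ = c • η := by
  obtain ⟨j, -⟩ := Function.ne_iff.1 hξ
  have : Nonempty ι := ⟨j⟩
  obtain ⟨⟨i, hi : ‖ξ i‖ = ‖ξ‖⟩, -⟩ := IsGreatest.pi_norm ξ
  have hc : ξ i ≠ 0 := by
    rw [← norm_ne_zero_iff, hi, norm_ne_zero_iff]
    exact hξ
  refine ⟨ξ i, (ξ i)⁻¹ • ξ, ?_, hi, (smul_inv_smul₀ hc ξ).symm⟩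
  rw [mem_sphere_zero_iff_norm, norm_smul, norm_inv, hi, inv_mul_cancel₀ (norm_ne_zero_iff.2 hξ)]

namespace MvPolynomial.IsHomogeneous

variable {ι 𝕜 : Type*} [Fintype ι] [NormedField 𝕜] {φ : MvPolynomial ι 𝕜} {n : ℕ}

theorem exists_mem_sphere_norm_eval_eq (hφ : φ.IsHomogeneous n) {ξ : ι → 𝕜} (hξ : ξ ≠ 0) :
    ∃ η ∈ Metric.sphere (0 : ι → 𝕜) 1, ‖eval ξ φ‖ = ‖ξ‖ ^ n * ‖eval η φ‖ := by
  obtain ⟨c, η, hη, hc, rfl⟩ := Pi.exists_eq_smul_mem_sphere_of_ne_zero hξ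
  exact ⟨η, hη, by rw [hφ.eval_smul, norm_mul, norm_pow, hc]⟩

theorem exists_norm_eval_bounds [ProperSpace 𝕜] (hφ : φ.IsHomogeneous n) (hn : 0 < n)
    (hzero : ∀ ξ, eval ξ φ = 0 → ξ = 0) :
    ∃ C₀ C₁ : ℝ, 0 < C₀ ∧ 0 < C₁ ∧ ∀ ξ : ι → 𝕜,
      C₀ * ‖ξ‖ ^ n ≤ ‖eval ξ φ‖ ∧ ‖eval ξ φ‖ ≤ C₁ * ‖ξ‖ ^ n := by
  have hcont : Continuous fun η : ι → 𝕜 => eval η φ := continuous_eval φ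
  obtain ⟨C₀, hC₀, hlow⟩ := (isCompact_sphere (0 : ι → 𝕜) 1).exists_forall_le'
    hcont.norm.continuousOn (a := 0) fun η hη =>
      norm_pos_iff.2 fun h => ne_zero_of_mem_unit_sphere ⟨η, hη⟩ (hzero η h)
  obtain ⟨C, hup⟩ := (isCompact_sphere (0 : ι → 𝕜) 1).exists_bound_of_continuousOn
    hcont.continuousOn
  refine ⟨C₀, max C 1, hC₀, by positivity, fun ξ => ?_⟩
  rcases eq_or_ne ξ 0 with rfl | hξ
  · rw [hφ.eval_zero_of_pos hn]
    simp [zero_pow hn.ne']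
  obtain ⟨η, hη, heq⟩ := hφ.exists_mem_sphere_norm_eval_eq hξ
  have hpow : 0 ≤ ‖ξ‖ ^ n := by positivity
  rw [heq, mul_comm C₀, mul_comm (max C 1)]
  exact ⟨mul_le_mul_of_nonneg_left (hlow η hη) hpow,
    mul_le_mul_of_nonneg_left ((hup η hη).trans (le_max_left C 1)) hpow⟩

end MvPolynomial.IsHomogeneous

/-- An elliptic polynomial of degree `d` satisfies
`C₀ ‖ξ‖_p^d ≤ |a(ξ)|_p ≤ C₁ ‖ξ‖_p^d`. -/
theorem elliptic_norm_bounds {p : ℕ} [Fact p.Prime] {N d : ℕ}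
    (a : MvPolynomial (Fin N) ℤ_[p]) (ha : IsElliptic p N a d) :
    ∃ C₀ C₁ : ℝ, 0 < C₀ ∧ 0 < C₁ ∧ ∀ ξ : Fin N → ℚ_[p],
      C₀ * ‖ξ‖ ^ d ≤ ‖evalPoly p N a ξ‖ ∧ ‖evalPoly p N a ξ‖ ≤ C₁ * ‖ξ‖ ^ d := by
  obtain ⟨hd, hhom, hzero⟩ := ha
  exact (hhom.map _).exists_norm_eval_bounds hd fun ξ => (hzero ξ).1
end

section
/- (p-adic Bochner–Schwartz Theorem, converse direction) For every regular Borel measure μ on ℚ_p^N (finite on compact sets), the linear functional F on D(ℚ_p^N) defined by (F, φ) = ∫_{ℚ_p^N} (Fφ)(ξ) dμ(ξ) is a positive-definite distribution, i.e. (F, conj(φ ∗ φ̃)) ≥ 0 for every test function φ. -/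
open MeasureTheory Complex Filter

/-!
Fubini and the translation invariance of Haar measure turn the Fourier transform of
`conj (φ ∗ φ̃)` at `ξ` into `|Fφ(-ξ)|²`, so its integral against any measure is a nonnegative
real number. This needs `x ↦ χ_p(ξ·x)` to be a continuous unitary character of `ℚ_p^N`. The
arithmetic input is that a rational number with `p`-power denominator which is a `p`-adic
integer lies in `ℤ`, so `χ_p(y)` depends only on the class of `y` modulo `ℤ_p` and is additive.
-/

open FourierTransform

lemma Rat.den_natCast_div_natCast_dvd (m k : ℕ) : ((m : ℚ) / k).den ∣ k := by
  have := Rat.den_dvd m k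
  rw [Rat.divInt_eq_div, Int.cast_natCast, Int.cast_natCast] at this
  exact Int.natCast_dvd_natCast.mp this

namespace Padic

variable {p : ℕ} [Fact p.Prime]

lemma exists_norm_mul_p_pow_le_one (y : ℚ_[p]) : ∃ n : ℕ, ‖y * (p : ℚ_[p]) ^ n‖ ≤ 1 := by
  have hp : (1 : ℝ) < p := mod_cast (Fact.out : p.Prime).one_lt
  obtain ⟨n, hn⟩ := pow_unbounded_of_one_lt ‖y‖ hp
  refine ⟨n, ?_⟩
  rw [norm_mul, norm_pow, norm_p, inv_pow, ← div_eq_mul_inv]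
  exact div_le_one_of_le₀ hn.le (by positivity)

lemma norm_sub_appr_div_p_pow_le_one {y : ℚ_[p]} {n : ℕ} (z : ℤ_[p])
    (hz : (z : ℚ_[p]) = y * (p : ℚ_[p]) ^ n) :
    ‖y - ((z.appr n / (p : ℚ) ^ n : ℚ) : ℚ_[p])‖ ≤ 1 := by
  have happr : ‖((z - z.appr n : ℤ_[p]) : ℚ_[p])‖ ≤ (p : ℝ) ^ (-n : ℤ) :=
    (PadicInt.norm_le_pow_iff_mem_span_pow _ _).2 (PadicInt.appr_spec n z)
  have hpn : (p : ℚ_[p]) ^ n ≠ 0 := pow_ne_zero _ (mod_cast (Fact.out : p.Prime).ne_zero)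
  have hdiv : y - ((z.appr n / (p : ℚ) ^ n : ℚ) : ℚ_[p])
      = ((z - z.appr n : ℤ_[p]) : ℚ_[p]) / (p : ℚ_[p]) ^ n := by
    rw [eq_div_iff hpn, PadicInt.coe_sub, hz]
    push_cast
    field_simp
  rw [hdiv, norm_div, norm_pow, norm_p, inv_pow, div_inv_eq_mul]
  calc _ ≤ (p : ℝ) ^ (-n : ℤ) * (p : ℝ) ^ n := by gcongr
    _ = 1 := by
      rw [zpow_neg, zpow_natCast,
        inv_mul_cancel₀ (pow_pos (mod_cast (Fact.out : p.Prime).pos) _).ne']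

lemma rat_den_eq_one_of_norm_le_one {q : ℚ} (hden : ∃ n : ℕ, q.den ∣ p ^ n)
    (hq : ‖(q : ℚ_[p])‖ ≤ 1) : q.den = 1 := by
  obtain ⟨n, hn⟩ := hden
  have hcop : p.Coprime q.den :=
    PadicInt.norm_natCast_eq_one_iff.mp (PadicInt.isUnit_iff.mp (PadicInt.isUnit_den q hq))
  exact Nat.Coprime.eq_one_of_dvd (hcop.pow_left n).symm hn

end Padic

section PadicAddChar

variable {p : ℕ} [Fact p.Prime]

lemma norm_sub_padicFrac_le_one_and_den_dvd (y : ℚ_[p]) :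
    ‖y - padicFrac p y‖ ≤ 1 ∧ ∃ n : ℕ, (padicFrac p y).den ∣ p ^ n := by
  classical
  have h := Padic.exists_norm_mul_p_pow_le_one y
  rw [padicFrac, dif_pos h]
  exact ⟨Padic.norm_sub_appr_div_p_pow_le_one _ rfl, _,
    mod_cast Rat.den_natCast_div_natCast_dvd _ _⟩

lemma fourierChar_padicFrac_eq {y : ℚ_[p]} {q : ℚ} (hden : ∃ n : ℕ, q.den ∣ p ^ n)
    (hy : ‖y - q‖ ≤ 1) : 𝐞 (padicFrac p y) = 𝐞 q := by
  obtain ⟨hfrac, n, hn⟩ := norm_sub_padicFrac_le_one_and_den_dvd y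
  obtain ⟨m, hm⟩ := hden
  set r := padicFrac p y - q
  have hr_norm : ‖(r : ℚ_[p])‖ ≤ 1 := by
    have : (r : ℚ_[p]) = (y - q) + -(y - padicFrac p y) := by push_cast [r]; ring
    rw [this]
    exact (IsUltrametricDist.norm_add_le_max _ _).trans (max_le hy (by rwa [norm_neg]))
  have hr_den : r.den = 1 := Padic.rat_den_eq_one_of_norm_le_one
    ⟨n + m, pow_add p n m ▸ (Rat.sub_den_dvd _ _).trans (mul_dvd_mul hn hm)⟩ hr_norm
  have hr_int : (padicFrac p y : ℝ) = q + r.num := by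
    rw [← Rat.cast_intCast, Rat.coe_int_num_of_den_eq_one hr_den]; push_cast [r]; ring
  rw [hr_int, AddChar.map_add_eq_mul, Real.fourierChar_apply' r.num, Circle.exp_two_pi_mul_int,
    mul_one]

variable (p) in
noncomputable def padicAddChar : AddChar ℚ_[p] Circle where
  toFun y := 𝐞 (padicFrac p y)
  map_zero_eq_one' := by
    simpa using fourierChar_padicFrac_eq (p := p) (y := 0) (q := 0) ⟨0, by simp⟩ (by simp)
  map_add_eq_mul' a b := by
    obtain ⟨ha, m, hm⟩ := norm_sub_padicFrac_le_one_and_den_dvd a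
    obtain ⟨hb, n, hn⟩ := norm_sub_padicFrac_le_one_and_den_dvd b
    have hden : (padicFrac p a + padicFrac p b).den ∣ p ^ (m + n) :=
      pow_add p m n ▸ (Rat.add_den_dvd _ _).trans (mul_dvd_mul hm hn)
    have hnorm : ‖a + b - ((padicFrac p a + padicFrac p b : ℚ) : ℚ_[p])‖ ≤ 1 := by
      rw [Rat.cast_add, add_sub_add_comm]
      exact (IsUltrametricDist.norm_add_le_max _ _).trans (max_le ha hb)
    rw [fourierChar_padicFrac_eq ⟨_, hden⟩ hnorm, Rat.cast_add, AddChar.map_add_eq_mul]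

lemma coe_padicAddChar (y : ℚ_[p]) : (padicAddChar p y : ℂ) = padicChar p y := by
  simp only [padicAddChar, AddChar.coe_mk, Real.fourierChar_apply, padicChar]
  push_cast
  ring_nf

lemma padicAddChar_eq_of_norm_sub_le_one {y y' : ℚ_[p]} (h : ‖y' - y‖ ≤ 1) :
    padicAddChar p y' = padicAddChar p y := by
  obtain ⟨hy, n, hn⟩ := norm_sub_padicFrac_le_one_and_den_dvd y
  have hnorm : ‖y' - padicFrac p y‖ ≤ 1 := by
    rw [← sub_add_sub_cancel]
    exact (IsUltrametricDist.norm_add_le_max _ _).trans (max_le h hy)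
  exact fourierChar_padicFrac_eq ⟨n, hn⟩ hnorm

lemma isLocallyConstant_padicAddChar : IsLocallyConstant (padicAddChar p) := by
  rw [IsLocallyConstant.iff_eventually_eq]
  intro y
  filter_upwards [Metric.closedBall_mem_nhds y one_pos] with y' hy'
  exact padicAddChar_eq_of_norm_sub_le_one (by rwa [← dist_eq_norm])

end PadicAddChar

section AddCharFourier

open ComplexConjugate

lemma conj_addChar {A : Type*} [AddGroup A] (ψ : AddChar A Circle) (x : A) :
    conj (ψ x : ℂ) = ψ (-x) := by
  rw [← Circle.coe_inv_eq_conj, AddChar.map_neg_eq_inv]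

variable {G : Type*} [AddCommGroup G] [MeasurableSpace G] {μ : Measure G}

lemma integral_addChar_neg_mul_sub [MeasurableAdd G] [MeasurableNeg G] [μ.IsAddLeftInvariant]
    [μ.IsNegInvariant] (ψ : AddChar G Circle) (f : G → ℂ) (y : G) :
    ∫ x, (ψ (-x) : ℂ) * f (y - x) ∂μ = ψ (-y) * ∫ x, (ψ x : ℂ) * f x ∂μ := by
  rw [← integral_sub_left_eq_self (fun x => (ψ x : ℂ) * f x) μ y, ← integral_const_mul]
  congr 1 with x
  rw [← mul_assoc, ← Circle.coe_mul, ← AddChar.map_add_eq_mul,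
    show -y + (y - x) = -x by abel]

theorem integral_addChar_mul_conj_conv [TopologicalSpace G] [OpensMeasurableSpace G]
    [MeasurableAdd₂ G] [MeasurableNeg G] [SFinite μ] [μ.IsAddLeftInvariant] [μ.IsNegInvariant]
    (ψ : AddChar G Circle) (hψ : Continuous ψ) {φ : G → ℂ} (hφ : Integrable φ μ) :
    ∫ x, (ψ (-x) : ℂ) * conj (∫ y, φ y * conj (φ (-(x - y))) ∂μ) ∂μ
      = normSq (∫ x, (ψ x : ℂ) * φ x ∂μ) := by
  set c := ∫ x, (ψ x : ℂ) * φ x ∂μ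
  have hint : Integrable (fun q : G × G => (ψ (-q.1) : ℂ) * (conj (φ q.2) * φ (-(q.1 - q.2))))
      (μ.prod μ) := by
    have hconj : Integrable (fun y => conj (φ y)) μ :=
      (LinearIsometryEquiv.integrable_comp_iff Complex.conjLIE).2 hφ
    have hconv := hconj.convolution_integrand (ContinuousLinearMap.mul ℂ ℂ) hφ.comp_neg
    have hψm : AEStronglyMeasurable (fun q : G × G => (ψ (-q.1) : ℂ)) (μ.prod μ) :=
      (((continuous_subtype_val.comp hψ).measurable.comp measurable_neg).comp
        measurable_fst).aestronglyMeasurable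
    exact hconv.bdd_mul (c := 1) hψm (.of_forall fun q => (Circle.norm_coe _).le)
  calc ∫ x, (ψ (-x) : ℂ) * conj (∫ y, φ y * conj (φ (-(x - y))) ∂μ) ∂μ
      = ∫ x, ∫ y, (ψ (-x) : ℂ) * (conj (φ y) * φ (-(x - y))) ∂μ ∂μ := by
        congr 1 with x
        simp only [← integral_conj, ← integral_const_mul, map_mul, Complex.conj_conj]
    _ = ∫ y, conj (φ y) * ∫ x, (ψ (-x) : ℂ) * φ (y - x) ∂μ ∂μ := by
        rw [integral_integral_swap hint]
        congr 1 with y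
        rw [← integral_const_mul]
        congr 1 with x
        rw [neg_sub]; ring
    _ = conj c * c := by
        simp only [integral_addChar_neg_mul_sub]
        rw [← integral_conj, ← integral_mul_const]
        congr 1 with y
        rw [map_mul, conj_addChar]
        ring
    _ = normSq c := by rw [mul_comm, Complex.mul_conj]

end AddCharFourier

section QpFourier

open ComplexConjugate

variable {p : ℕ} [Fact p.Prime] {N : ℕ}

instance : (QpHaar p N).IsAddHaarMeasure := by
  unfold QpHaar; infer_instance

noncomputable def padicDotChar (ξ : Fin N → ℚ_[p]) : AddChar (Fin N → ℚ_[p]) Circle :=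
  (padicAddChar p).compAddMonoidHom (AddMonoidHom.mk' (ξ ⬝ᵥ ·) (dotProduct_add ξ))

lemma continuous_padicDotChar (ξ : Fin N → ℚ_[p]) : Continuous (padicDotChar ξ) :=
  isLocallyConstant_padicAddChar.continuous.comp (continuous_const.dotProduct continuous_id)

lemma QpFT_eq_integral_padicDotChar (f : (Fin N → ℚ_[p]) → ℂ) (ξ : Fin N → ℚ_[p]) :
    QpFT p N f ξ = ∫ x, (padicDotChar ξ (-x) : ℂ) * f x ∂(QpHaar p N) := by
  simp only [padicDotChar, AddChar.compAddMonoidHom_apply, AddMonoidHom.mk'_apply,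
    coe_padicAddChar, dotProduct_neg]
  rfl

lemma padicDotChar_neg_apply_neg (ξ x : Fin N → ℚ_[p]) :
    padicDotChar (-ξ) (-x) = padicDotChar ξ x := by
  simp only [padicDotChar, AddChar.compAddMonoidHom_apply, AddMonoidHom.mk'_apply,
    neg_dotProduct, dotProduct_neg, neg_neg]

lemma QpFT_conj_conv_self {φ : (Fin N → ℚ_[p]) → ℂ} (hφ : Integrable φ (QpHaar p N))
    (ξ : Fin N → ℚ_[p]) :
    QpFT p N (fun x => conj (QpConv p N φ (fun z => conj (φ (-z))) x)) ξ
      = normSq (QpFT p N φ (-ξ)) := by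
  simp_rw [QpFT_eq_integral_padicDotChar, padicDotChar_neg_apply_neg]
  exact integral_addChar_mul_conj_conv _ (continuous_padicDotChar ξ) hφ

end QpFourier

theorem bochner_schwartz_converse_general {p : ℕ} [Fact p.Prime] {N : ℕ}
    (μ : Measure (Fin N → ℚ_[p]))
    (φ : (Fin N → ℚ_[p]) → ℂ) (hφ : IsTestFn p N φ) :
    0 ≤ (∫ ξ, QpFT p N (fun x => (starRingEnd ℂ)
          (QpConv p N φ (fun z => (starRingEnd ℂ) (φ (-z))) x)) ξ ∂μ).re ∧
    (∫ ξ, QpFT p N (fun x => (starRingEnd ℂ)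
          (QpConv p N φ (fun z => (starRingEnd ℂ) (φ (-z))) x)) ξ ∂μ).im = 0 := by
  have hφ_int : Integrable φ (QpHaar p N) :=
    hφ.1.continuous.integrable_of_hasCompactSupport hφ.2
  simp_rw [QpFT_conj_conv_self hφ_int]
  rw [integral_complex_ofReal]
  exact ⟨integral_nonneg fun _ => normSq_nonneg _, ofReal_im _⟩

/-- p-adic Bochner–Schwartz, converse direction. The Fourier transform of
a regular Borel measure is a positive-definite distribution: for every test function `φ`,
`(F, conj(φ ∗ φ̃)) = ∫ F(conj(φ ∗ φ̃))(ξ) dμ(ξ)` is real and nonnegative. -/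
theorem bochner_schwartz_converse {p : ℕ} [Fact p.Prime] {N : ℕ}
    (μ : Measure (Fin N → ℚ_[p])) [μ.Regular]
    (φ : (Fin N → ℚ_[p]) → ℂ) (hφ : IsTestFn p N φ) :
    0 ≤ (∫ ξ, QpFT p N (fun x => (starRingEnd ℂ)
          (QpConv p N φ (fun z => (starRingEnd ℂ) (φ (-z))) x)) ξ ∂μ).re ∧
    (∫ ξ, QpFT p N (fun x => (starRingEnd ℂ)
          (QpConv p N φ (fun z => (starRingEnd ℂ) (φ (-z))) x)) ξ ∂μ).im = 0 :=
  bochner_schwartz_converse_general μ φ hφ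
end

section
/- Let μ be a regular Borel measure on ℚ_p^N and let f : ℚ_p^N ∖ {0} → [0,∞) be a continuous, locally integrable function such that ∫_{ℚ_p^N} f(x) φ(x) d^N x = ∫_{ℚ_p^N} (Fφ)(ξ) dμ(ξ) for every test function φ ∈ D(ℚ_p^N). Then for all real-valued test functions φ, ψ ∈ D_ℝ(ℚ_p^N), ∫_{ℚ_p^N} ∫_{ℚ_p^N} φ(x) f(x−y) ψ(y) d^N x d^N y = ∫_{ℚ_p^N} (Fφ)(ξ) conj((Fψ)(ξ)) dμ(ξ). -/
open MeasureTheory Complex Filter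

/-!
Let `h(z) = ∫ φ(x) ψ(x - z) dx` be the cross-correlation of `φ` and `ψ`. Fubini and the
translation invariance of Haar measure turn the double integral into `∫ f h`. Since `ψ` is
locally constant with compact support it is uniformly locally constant, so `h` is again a test
function, and the hypothesis on `f` gives `∫ f h = ∫ Fh dμ`. Finally `χ_p` is an additive
character with `χ_p(-y) = conj χ_p(y)` (because `{a + b}_p - {a}_p - {b}_p` is a rational with
`p`-power denominator and `p`-adic norm at most `1`, hence an integer), which yields
`Fh = Fφ · conj(Fψ)`.
-/

section Character

variable {p : ℕ} [Fact p.Prime]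

lemma padicFrac_spec (y : ℚ_[p]) :
    ∃ n : ℕ, ∃ m : ℤ,
      padicFrac p y * (p : ℚ) ^ n = m ∧ ‖(padicFrac p y : ℚ_[p]) - y‖ ≤ 1 := by
  have hp : (1 : ℝ) < p := mod_cast (Fact.out : p.Prime).one_lt
  have hex : ∃ n : ℕ, ‖y * (p : ℚ_[p]) ^ n‖ ≤ 1 := by
    obtain ⟨n, hn⟩ := pow_unbounded_of_one_lt ‖y‖ hp
    refine ⟨n, ?_⟩
    rw [norm_mul, norm_pow, Padic.norm_p, inv_pow, ← div_eq_mul_inv, div_le_one (by positivity)]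
    exact hn.le
  rw [padicFrac, dif_pos hex]
  set n := Nat.find hex
  set z : ℤ_[p] := ⟨y * (p : ℚ_[p]) ^ n, Nat.find_spec hex⟩
  have hpn : (p : ℚ) ^ n ≠ 0 := pow_ne_zero _ (mod_cast (Fact.out : p.Prime).ne_zero)
  refine ⟨n, z.appr n, by rw [div_mul_cancel₀ _ hpn, Int.cast_natCast], ?_⟩
  have happr : ‖(z : ℚ_[p]) - (z.appr n : ℚ_[p])‖ ≤ (p : ℝ) ^ (-n : ℤ) := by
    have := (PadicInt.norm_le_pow_iff_mem_span_pow _ n).2 (PadicInt.appr_spec n z)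
    exact_mod_cast this
  have hfrac : (((z.appr n : ℚ) / (p : ℚ) ^ n : ℚ) : ℚ_[p]) - y
      = -((z : ℚ_[p]) - (z.appr n : ℚ_[p])) / (p : ℚ_[p]) ^ n := by
    have hpn' : (p : ℚ_[p]) ^ n ≠ 0 := pow_ne_zero _ (mod_cast (Fact.out : p.Prime).ne_zero)
    push_cast
    field_simp
    simp [z, mul_comm]
  rw [hfrac, norm_div, norm_neg, norm_pow, Padic.norm_p, div_le_one (by positivity)]
  simpa [zpow_neg, zpow_natCast, inv_pow] using happr

lemma exists_int_eq_of_norm_le_one_of_mul_pow_eq_int {q : ℚ} {n : ℕ} {m : ℤ}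
    (hm : q * (p : ℚ) ^ n = m) (hq : ‖(q : ℚ_[p])‖ ≤ 1) : ∃ k : ℤ, q = k := by
  have hmq : ((m : ℚ) : ℚ_[p]) = (q : ℚ_[p]) * (p : ℚ_[p]) ^ n := by
    rw [← hm]; push_cast; rfl
  have hdvd : ((p : ℤ) ^ n) ∣ m := by
    refine (Padic.norm_int_le_pow_iff_dvd m n).1 ?_
    rw [show (m : ℚ_[p]) = ((m : ℚ) : ℚ_[p]) by norm_cast, hmq, norm_mul, norm_pow,
      Padic.norm_p, zpow_neg, zpow_natCast, inv_pow]
    exact mul_le_of_le_one_left (by positivity) hq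
  obtain ⟨k, hk⟩ := hdvd
  have hpn : (p : ℚ) ^ n ≠ 0 := pow_ne_zero n (mod_cast (Fact.out : p.Prime).ne_zero)
  refine ⟨k, mul_right_cancel₀ hpn ?_⟩
  rw [hm, hk]; push_cast; ring

lemma exp_two_pi_I_mul_eq_one_of_mul_pow_eq_int {q : ℚ} {n : ℕ} {m : ℤ}
    (hm : q * (p : ℚ) ^ n = m) (hq : ‖(q : ℚ_[p])‖ ≤ 1) :
    Complex.exp (2 * Real.pi * Complex.I * (q : ℂ)) = 1 := by
  obtain ⟨k, rfl⟩ := exists_int_eq_of_norm_le_one_of_mul_pow_eq_int hm hq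
  rw [Rat.cast_intCast, mul_comm, Complex.exp_int_mul_two_pi_mul_I]

lemma padicChar_eq_one_of_norm_le_one {y : ℚ_[p]} (hy : ‖y‖ ≤ 1) : padicChar p y = 1 := by
  obtain ⟨n, m, hm, hfrac⟩ := padicFrac_spec y
  refine exp_two_pi_I_mul_eq_one_of_mul_pow_eq_int hm ?_
  simpa using (IsUltrametricDist.norm_add_le_max _ y).trans (max_le hfrac hy)

lemma padicChar_add (a b : ℚ_[p]) : padicChar p (a + b) = padicChar p a * padicChar p b := by
  obtain ⟨n₁, m₁, hm₁, h₁⟩ := padicFrac_spec (a + b)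
  obtain ⟨n₂, m₂, hm₂, h₂⟩ := padicFrac_spec a
  obtain ⟨n₃, m₃, hm₃, h₃⟩ := padicFrac_spec b
  set q := padicFrac p (a + b) - padicFrac p a - padicFrac p b with hq
  have hqm : q * (p : ℚ) ^ (n₁ + n₂ + n₃)
      = ((m₁ * p ^ (n₂ + n₃) - m₂ * p ^ (n₁ + n₃) - m₃ * p ^ (n₁ + n₂) : ℤ) : ℚ) := by
    push_cast
    rw [← hm₁, ← hm₂, ← hm₃]
    ring
  have hqn : ‖(q : ℚ_[p])‖ ≤ 1 := by
    have hsplit : (q : ℚ_[p]) = ((padicFrac p (a + b) : ℚ_[p]) - (a + b))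
        + ((a - padicFrac p a) + (b - padicFrac p b)) := by
      push_cast [hq]; ring
    rw [norm_sub_rev] at h₂ h₃
    rw [hsplit]
    exact (IsUltrametricDist.norm_add_le_max _ _).trans (max_le h₁
      ((IsUltrametricDist.norm_add_le_max _ _).trans (max_le h₂ h₃)))
  calc padicChar p (a + b)
      = Complex.exp (2 * Real.pi * Complex.I * (padicFrac p a : ℂ)
          + 2 * Real.pi * Complex.I * (padicFrac p b : ℂ))
        * Complex.exp (2 * Real.pi * Complex.I * (q : ℂ)) := by
        rw [padicChar, ← Complex.exp_add]; push_cast [hq]; ring_nf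
    _ = padicChar p a * padicChar p b := by
        rw [exp_two_pi_I_mul_eq_one_of_mul_pow_eq_int hqm hqn, mul_one, Complex.exp_add]; rfl

lemma padicChar_neg (y : ℚ_[p]) : padicChar p (-y) = starRingEnd ℂ (padicChar p y) := by
  have hinv : padicChar p (-y) * padicChar p y = 1 := by
    rw [← padicChar_add, neg_add_cancel, padicChar_eq_one_of_norm_le_one (by simp)]
  have hconj : starRingEnd ℂ (padicChar p y) = (padicChar p y)⁻¹ := by
    rw [padicChar, ← Complex.exp_conj, ← Complex.exp_neg]
    simp [map_ofNat]
  rw [hconj, eq_inv_of_mul_eq_one_left hinv]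

lemma isLocallyConstant_padicChar : IsLocallyConstant (padicChar p) := by
  refine (IsLocallyConstant.iff_exists_open _).2 fun x ↦
    ⟨Metric.ball x 1, Metric.isOpen_ball, Metric.mem_ball_self one_pos, fun y hy ↦ ?_⟩
  rw [← add_sub_cancel x y, padicChar_add,
    padicChar_eq_one_of_norm_le_one (y := y - x) (by simpa [dist_eq_norm] using hy.le), mul_one]

end Character

open scoped Pointwise

lemma IsLocallyConstant.exists_pos_forall_dist_lt_imp_eq {X Y : Type*} [PseudoMetricSpace X]
    [Zero Y] {f : X → Y} (hf : IsLocallyConstant f) (hc : HasCompactSupport f) :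
    ∃ δ > 0, ∀ x y, dist x y < δ → f x = f y := by
  -- with the discrete uniformity on `Y`, uniform continuity says `f` is constant on an entourage
  let : UniformSpace Y := ⊥
  have hu : UniformContinuous f :=
    hc.uniformContinuous_of_continuous ((IsLocallyConstant.iff_continuous f).1 hf)
  obtain ⟨δ, hδ, h⟩ :=
    Metric.mem_uniformity_dist.1 (hu (DiscreteUniformity.relId_mem_uniformity Y))
  exact ⟨δ, hδ, fun x y hxy ↦ h hxy⟩

lemma isCompact_tsupport_sub_tsupport {G M : Type*} [AddCommGroup G] [TopologicalSpace G]
    [IsTopologicalAddGroup G] [Zero M] {φ ψ : G → M} (hφ : HasCompactSupport φ)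
    (hψ : HasCompactSupport ψ) : IsCompact (tsupport φ - tsupport ψ) := by
  have := (hφ.prod hψ).image continuous_sub
  rwa [Set.image_prod, Set.image2_sub] at this

lemma mul_sub_eq_zero_of_notMem_tsupport_sub_tsupport {G M : Type*} [AddCommGroup G]
    [TopologicalSpace G] [MulZeroClass M] [NoZeroDivisors M] {φ ψ : G → M} {z : G}
    (hz : z ∉ tsupport φ - tsupport ψ) (x : G) : φ x * ψ (x - z) = 0 := by
  by_contra hne
  obtain ⟨hφx, hψx⟩ := mul_ne_zero_iff.1 hne
  exact hz (by simpa using Set.sub_mem_sub (subset_tsupport φ hφx) (subset_tsupport ψ hψx))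

section CrossCorrelation

variable {G : Type*} [NormedAddCommGroup G] [MeasurableSpace G]

noncomputable def crossCorrelation (μ : Measure G) (φ ψ : G → ℝ) (z : G) : ℝ :=
  ∫ x, φ x * ψ (x - z) ∂μ

lemma isLocallyConstant_crossCorrelation (μ : Measure G) (φ : G → ℝ) {ψ : G → ℝ}
    (hψ : IsLocallyConstant ψ) (hψc : HasCompactSupport ψ) :
    IsLocallyConstant (crossCorrelation μ φ ψ) := by
  obtain ⟨δ, hδ, hψδ⟩ := hψ.exists_pos_forall_dist_lt_imp_eq hψc
  refine (IsLocallyConstant.iff_exists_open _).2 fun z ↦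
    ⟨Metric.ball z δ, Metric.isOpen_ball, Metric.mem_ball_self hδ, fun w hw ↦ ?_⟩
  refine integral_congr_ae (ae_of_all _ fun x ↦ ?_)
  simp only [hψδ (x - w) (x - z) (by rwa [dist_sub_left])]

lemma HasCompactSupport.crossCorrelation (μ : Measure G) {φ ψ : G → ℝ}
    (hφ : HasCompactSupport φ) (hψ : HasCompactSupport ψ) :
    HasCompactSupport (crossCorrelation μ φ ψ) :=
  HasCompactSupport.intro (isCompact_tsupport_sub_tsupport hφ hψ) fun z hz ↦ by
    simp [_root_.crossCorrelation, mul_sub_eq_zero_of_notMem_tsupport_sub_tsupport hz]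

variable [BorelSpace G] [SecondCountableTopology G] [LocallyCompactSpace G]
  (μ : Measure G) [μ.IsAddHaarMeasure]

lemma integrable_mul_mul_sub {𝕜 : Type*} [RCLike 𝕜] {f φ ψ : G → 𝕜}
    (hf : LocallyIntegrable f μ) (hφ : Continuous φ) (hφc : HasCompactSupport φ)
    (hψ : Continuous ψ) (hψc : HasCompactSupport ψ) :
    Integrable (fun q : G × G ↦ φ q.1 * f q.2 * ψ (q.1 - q.2)) (μ.prod μ) := by
  set S := tsupport φ - tsupport ψ
  have hS : IsCompact S := isCompact_tsupport_sub_tsupport hφc hψc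
  have hfS : Integrable (S.indicator f) μ :=
    (hf.integrableOn_isCompact hS).integrable_indicator hS.measurableSet
  have hconv : Integrable (fun q : G × G ↦ S.indicator f q.2 * ψ (q.1 - q.2)) (μ.prod μ) := by
    simpa using hfS.convolution_integrand (ContinuousLinearMap.mul 𝕜 𝕜)
      (hψ.integrable_of_hasCompactSupport hψc)
  obtain ⟨C, hC⟩ := hφc.exists_bound_of_continuous hφ
  refine (hconv.bdd_mul hφ.aestronglyMeasurable.comp_fst (ae_of_all _ fun q ↦ hC q.1)).congr
    (ae_of_all _ fun q ↦ ?_)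
  by_cases hq : q.2 ∈ S
  · simp only [Set.indicator_of_mem hq]; ring
  · have := mul_sub_eq_zero_of_notMem_tsupport_sub_tsupport hq q.1
    simp only [Set.indicator_of_notMem hq]
    linear_combination -f q.2 * this

theorem integral_integral_mul_sub_mul [μ.IsNegInvariant] {𝕜 : Type*} [RCLike 𝕜]
    {f φ ψ : G → 𝕜} (hf : LocallyIntegrable f μ) (hφ : Continuous φ) (hφc : HasCompactSupport φ)
    (hψ : Continuous ψ) (hψc : HasCompactSupport ψ) :
    ∫ x, ∫ y, φ x * f (x - y) * ψ y ∂μ ∂μ = ∫ z, f z * ∫ x, φ x * ψ (x - z) ∂μ ∂μ :=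
  calc ∫ x, ∫ y, φ x * f (x - y) * ψ y ∂μ ∂μ
      = ∫ x, ∫ z, φ x * f z * ψ (x - z) ∂μ ∂μ := by
        congr with x
        simpa using integral_sub_left_eq_self (fun z ↦ φ x * f z * ψ (x - z)) μ x
    _ = ∫ z, ∫ x, φ x * f z * ψ (x - z) ∂μ ∂μ :=
        integral_integral_swap (integrable_mul_mul_sub μ hf hφ hφc hψ hψc)
    _ = ∫ z, f z * ∫ x, φ x * ψ (x - z) ∂μ ∂μ := by
        congr with z
        rw [← integral_const_mul]
        congr with x
        ring

end CrossCorrelation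

section FourierTransform

variable {p : ℕ} [Fact p.Prime] {N : ℕ}

instance QpHaar.isAddHaarMeasure : (QpHaar p N).IsAddHaarMeasure :=
  Measure.isAddHaarMeasure_addHaarMeasure _

lemma padicChar_neg_sum_mul_sub (ξ x y : Fin N → ℚ_[p]) :
    padicChar p (-(∑ j, ξ j * (x - y) j))
      = padicChar p (-(∑ j, ξ j * x j)) * padicChar p (∑ j, ξ j * y j) := by
  rw [← padicChar_add]
  simp only [Pi.sub_apply, mul_sub, Finset.sum_sub_distrib]
  ring_nf

lemma conj_QpFT_ofReal (ψ : (Fin N → ℚ_[p]) → ℝ) (ξ : Fin N → ℚ_[p]) :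
    starRingEnd ℂ (QpFT p N (fun x ↦ (ψ x : ℂ)) ξ)
      = ∫ x, padicChar p (∑ j, ξ j * x j) * ψ x ∂(QpHaar p N) := by
  rw [QpFT, ← integral_conj]
  congr with x
  rw [map_mul, padicChar_neg, Complex.conj_conj, Complex.conj_ofReal]

theorem QpFT_crossCorrelation {φ ψ : (Fin N → ℚ_[p]) → ℝ} (hφ : Continuous φ)
    (hφc : HasCompactSupport φ) (hψ : Continuous ψ) (hψc : HasCompactSupport ψ)
    (ξ : Fin N → ℚ_[p]) :
    QpFT p N (fun z ↦ (crossCorrelation (QpHaar p N) φ ψ z : ℂ)) ξ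
      = QpFT p N (fun x ↦ (φ x : ℂ)) ξ * starRingEnd ℂ (QpFT p N (fun x ↦ (ψ x : ℂ)) ξ) := by
  set e : (Fin N → ℚ_[p]) → ℂ := fun z ↦ padicChar p (-(∑ j, ξ j * z j))
  have he : Continuous e := isLocallyConstant_padicChar.continuous.comp (by fun_prop)
  calc QpFT p N (fun z ↦ (crossCorrelation (QpHaar p N) φ ψ z : ℂ)) ξ
      = ∫ z, e z * ∫ x, (φ x : ℂ) * ψ (x - z) ∂(QpHaar p N) ∂(QpHaar p N) := by
        simp only [QpFT, crossCorrelation, e, ← integral_complex_ofReal, Complex.ofReal_mul]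
    _ = ∫ x, ∫ y, (φ x : ℂ) * e (x - y) * ψ y ∂(QpHaar p N) ∂(QpHaar p N) :=
        (integral_integral_mul_sub_mul _ he.locallyIntegrable (by fun_prop)
          (hφc.comp_left Complex.ofReal_zero) (by fun_prop)
          (hψc.comp_left Complex.ofReal_zero)).symm
    _ = ∫ x, e x * φ x * ∫ y, padicChar p (∑ j, ξ j * y j) * ψ y ∂(QpHaar p N)
          ∂(QpHaar p N) := by
        congr with x
        rw [← integral_const_mul]
        congr with y
        simp only [e, padicChar_neg_sum_mul_sub]
        ring
    _ = QpFT p N (fun x ↦ (φ x : ℂ)) ξ * starRingEnd ℂ (QpFT p N (fun x ↦ (ψ x : ℂ)) ξ) := by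
        rw [integral_mul_const, conj_QpFT_ofReal]
        rfl

end FourierTransform

theorem covariance_spectral_representation_general {p : ℕ} [Fact p.Prime] {N : ℕ}
    (μ : Measure (Fin N → ℚ_[p])) (f : (Fin N → ℚ_[p]) → ℝ)
    (hf_loc : LocallyIntegrable f (QpHaar p N))
    (hrep : ∀ φ : (Fin N → ℚ_[p]) → ℂ, IsTestFn p N φ →
      ∫ x, (f x : ℂ) * φ x ∂(QpHaar p N) = ∫ ξ, QpFT p N φ ξ ∂μ)
    (φ ψ : (Fin N → ℚ_[p]) → ℝ)
    (hφ : IsLocallyConstant φ ∧ HasCompactSupport φ)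
    (hψ : IsLocallyConstant ψ ∧ HasCompactSupport ψ) :
    ((∫ x, ∫ y, φ x * f (x - y) * ψ y ∂(QpHaar p N) ∂(QpHaar p N) : ℝ) : ℂ)
      = ∫ ξ, QpFT p N (fun x => (φ x : ℂ)) ξ *
          (starRingEnd ℂ) (QpFT p N (fun x => (ψ x : ℂ)) ξ) ∂μ := by
  obtain ⟨hφlc, hφc⟩ := hφ
  obtain ⟨hψlc, hψc⟩ := hψ
  set h := crossCorrelation (QpHaar p N) φ ψ
  have htest : IsTestFn p N (fun z ↦ (h z : ℂ)) :=
    ⟨(isLocallyConstant_crossCorrelation _ φ hψlc hψc).comp ((↑) : ℝ → ℂ),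
      (hφc.crossCorrelation _ hψc).comp_left Complex.ofReal_zero⟩
  calc ((∫ x, ∫ y, φ x * f (x - y) * ψ y ∂(QpHaar p N) ∂(QpHaar p N) : ℝ) : ℂ)
      = ∫ z, (f z : ℂ) * h z ∂(QpHaar p N) := by
        rw [integral_integral_mul_sub_mul _ hf_loc hφlc.continuous hφc hψlc.continuous hψc,
          ← integral_complex_ofReal]
        push_cast
        rfl
    _ = ∫ ξ, QpFT p N (fun z ↦ (h z : ℂ)) ξ ∂μ := hrep _ htest
    _ = _ := by
        congr with ξ
        exact QpFT_crossCorrelation hφlc.continuous hφc hψlc.continuous hψc ξ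

/-- If `f` is a nonnegative continuous (off the origin), locally
integrable function whose induced distribution is the Fourier transform of a regular
Borel measure `μ`, then for all real-valued test functions `φ, ψ`:
`∫∫ φ(x) f(x−y) ψ(y) d^N x d^N y = ∫ (Fφ)(ξ) conj((Fψ)(ξ)) dμ(ξ)`. -/
theorem covariance_spectral_representation {p : ℕ} [Fact p.Prime] {N : ℕ}
    (μ : Measure (Fin N → ℚ_[p])) [μ.Regular] (f : (Fin N → ℚ_[p]) → ℝ)
    (hf_cont : ContinuousOn f {x | x ≠ 0}) (hf_nonneg : ∀ x, 0 ≤ f x)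
    (hf_loc : LocallyIntegrable f (QpHaar p N))
    (hrep : ∀ φ : (Fin N → ℚ_[p]) → ℂ, IsTestFn p N φ →
      ∫ x, (f x : ℂ) * φ x ∂(QpHaar p N) = ∫ ξ, QpFT p N φ ξ ∂μ)
    (φ ψ : (Fin N → ℚ_[p]) → ℝ)
    (hφ : IsLocallyConstant φ ∧ HasCompactSupport φ)
    (hψ : IsLocallyConstant ψ ∧ HasCompactSupport ψ) :
    ((∫ x, ∫ y, φ x * f (x - y) * ψ y ∂(QpHaar p N) ∂(QpHaar p N) : ℝ) : ℂ)
      = ∫ ξ, QpFT p N (fun x => (φ x : ℂ)) ξ *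
          (starRingEnd ℂ) (QpFT p N (fun x => (ψ x : ℂ)) ξ) ∂μ :=
  covariance_spectral_representation_general μ f hf_loc hrep φ ψ hφ hψ
end

section
/- Let a be an elliptic polynomial of degree d with coefficients in ℤ_p, let β > 0, let T > 0, and let μ be a regular Borel measure on ℚ_p^N satisfying ∫_{ℚ_p^N} ‖ξ‖_p^{dβ} dμ(ξ) < +∞. Then: (1) lim_{h→0⁺} ∫₀^T ∫_{ℚ_p^N} sup{ |e^{−r|a(ξ)|_p^β} − e^{−t|a(ξ)|_p^β}|² : r ∈ [0,T], |r−t| < h } dμ(ξ) dt = 0; and (2) ∫₀^T ∫_{ℚ_p^N} e^{−2t|a(ξ)|_p^β} dμ(ξ) dt < +∞. -/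
open MeasureTheory Complex Filter

/-!
Homogeneity and the integrality of the coefficients give `|a(ξ)|_p^β ≤ ‖ξ‖_p^{dβ}`, and
`|e^{-x} - e^{-y}|² ≤ |x - y|` for `x, y ≥ 0`, so the inner supremum is at most
`h ‖ξ‖_p^{dβ}`: the double integral is `O(h)`. The moment condition, together with finiteness
of `μ` on the unit ball, makes `μ` finite, which bounds the second integral by `T μ(ℚ_p^N)`.
-/

open Set
open scoped ENNReal Topology

lemma sq_abs_exp_neg_sub_exp_neg_le {x y : ℝ} (hx : 0 ≤ x) (hy : 0 ≤ y) :
    |Real.exp (-x) - Real.exp (-y)| ^ 2 ≤ |x - y| := by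
  wlog hxy : x ≤ y generalizing x y
  · rw [abs_sub_comm, abs_sub_comm x y]
    exact this hy hx (le_of_not_ge hxy)
  have hdiff : Real.exp (-y) = Real.exp (-x) * Real.exp (-(y - x)) := by
    rw [← Real.exp_add]; ring_nf
  have hle_one : Real.exp (-x) ≤ 1 := Real.exp_le_one_iff.mpr (by linarith)
  have hle_diff : Real.exp (-x) - Real.exp (-y) ≤ y - x := by
    nlinarith [Real.one_sub_le_exp_neg (y - x), Real.exp_pos (-x)]
  have hnonneg : 0 ≤ Real.exp (-x) - Real.exp (-y) := by
    linarith [Real.exp_le_exp.mpr (neg_le_neg hxy)]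
  rw [sq_abs, abs_of_nonpos (by linarith : x - y ≤ 0)]
  nlinarith [Real.exp_pos (-y)]

lemma iSup_sq_abs_exp_neg_mul_sub_le {A T t h : ℝ} (hA : 0 ≤ A) (ht : 0 ≤ t) (hh : 0 ≤ h) :
    (⨆ r ∈ {r : ℝ | r ∈ Icc (0 : ℝ) T ∧ |r - t| < h},
      |Real.exp (-(r * A)) - Real.exp (-(t * A))| ^ 2) ≤ h * A := by
  have hhA : 0 ≤ h * A := mul_nonneg hh hA
  refine Real.iSup_le (fun r => Real.iSup_le (fun ⟨⟨hr, _⟩, hrt⟩ => ?_) hhA) hhA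
  calc |Real.exp (-(r * A)) - Real.exp (-(t * A))| ^ 2
      ≤ |r * A - t * A| := sq_abs_exp_neg_sub_exp_neg_le (mul_nonneg hr hA) (mul_nonneg ht hA)
    _ = |r - t| * A := by rw [← sub_mul, abs_mul, abs_of_nonneg hA]
    _ ≤ h * A := mul_le_mul_of_nonneg_right hrt.le hA

lemma norm_evalPoly_le_pow {p N d : ℕ} [Fact p.Prime] {a : MvPolynomial (Fin N) ℤ_[p]}
    (ha : a.IsHomogeneous d) (ξ : Fin N → ℚ_[p]) :
    ‖evalPoly p N a ξ‖ ≤ ‖ξ‖ ^ d := by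
  rw [evalPoly, MvPolynomial.eval_eq]
  refine IsUltrametricDist.norm_sum_le_of_forall_le_of_nonneg (by positivity) fun v hv => ?_
  have hcoeff : a.coeff v ≠ 0 :=
    MvPolynomial.mem_support_iff.mp (MvPolynomial.support_map_subset _ _ hv)
  have hdeg : ∑ i ∈ v.support, v i = d := by
    simpa [Finsupp.weight_apply, Finsupp.sum, smul_eq_mul] using ha hcoeff
  rw [norm_mul, MvPolynomial.coeff_map, norm_prod, ← hdeg, ← Finset.prod_pow_eq_pow_sum]
  simp only [norm_pow]
  calc _ ≤ 1 * ∏ i ∈ v.support, ‖ξ‖ ^ v i := by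
        gcongr
        · exact (a.coeff v).norm_le_one
        · exact norm_le_pi_norm ξ _
    _ = ∏ i ∈ v.support, ‖ξ‖ ^ v i := one_mul _

lemma norm_evalPoly_rpow_le {p N d : ℕ} [Fact p.Prime] {a : MvPolynomial (Fin N) ℤ_[p]}
    (ha : a.IsHomogeneous d) {β : ℝ} (hβ : 0 ≤ β) (ξ : Fin N → ℚ_[p]) :
    ‖evalPoly p N a ξ‖ ^ β ≤ ‖ξ‖ ^ ((d : ℝ) * β) := by
  rw [Real.rpow_mul (norm_nonneg _), Real.rpow_natCast]
  exact Real.rpow_le_rpow (norm_nonneg _) (norm_evalPoly_le_pow ha ξ) hβ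

lemma isFiniteMeasure_of_lintegral_norm_rpow_lt_top {E : Type*} [NormedAddCommGroup E]
    [ProperSpace E] [MeasurableSpace E] [OpensMeasurableSpace E] {μ : Measure E}
    [IsFiniteMeasureOnCompacts μ] {s : ℝ} (hs : 0 ≤ s)
    (hmom : ∫⁻ x, ENNReal.ofReal (‖x‖ ^ s) ∂μ < ⊤) : IsFiniteMeasure μ := by
  have hfar : μ {x | 1 ≤ ENNReal.ofReal (‖x‖ ^ s)} < ⊤ := by
    refine lt_of_le_of_lt ?_ hmom
    have hmeas : Measurable fun x : E => ENNReal.ofReal (‖x‖ ^ s) :=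
      ENNReal.measurable_ofReal.comp
        ((Real.continuous_rpow_const hs).measurable.comp measurable_norm)
    simpa using mul_meas_ge_le_lintegral₀ hmeas.aemeasurable 1
  have hcover : univ ⊆ Metric.closedBall (0 : E) 1 ∪ {x | 1 ≤ ENNReal.ofReal (‖x‖ ^ s)} := by
    intro x _
    rcases le_or_gt ‖x‖ 1 with hx | hx
    · exact Or.inl (mem_closedBall_zero_iff.mpr hx)
    · exact Or.inr (ENNReal.one_le_ofReal.mpr (Real.one_le_rpow hx.le hs))
  refine ⟨(measure_mono hcover).trans_lt ?_⟩
  exact (measure_union_le _ _).trans_lt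
    (ENNReal.add_lt_top.mpr ⟨(isCompact_closedBall 0 1).measure_lt_top, hfar⟩)

lemma tendsto_nhdsGT_zero_of_le_ofReal_mul {f : ℝ → ℝ≥0∞} {C : ℝ≥0∞} (hC : C ≠ ⊤)
    (hf : ∀ᶠ h in 𝓝[>] 0, f h ≤ ENNReal.ofReal h * C) : Tendsto f (𝓝[>] 0) (𝓝 0) := by
  have hbound : Tendsto (fun h : ℝ => ENNReal.ofReal h * C) (𝓝[>] 0) (𝓝 0) := by
    simpa using ENNReal.Tendsto.mul_const ((ENNReal.continuous_ofReal.tendsto 0).mono_left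
      nhdsWithin_le_nhds) (Or.inr hC)
  exact tendsto_of_tendsto_of_tendsto_of_le_of_le' tendsto_const_nhds hbound
    (Eventually.of_forall fun _ => zero_le) hf

theorem hypothesis_B_of_moment_general {p : ℕ} [Fact p.Prime] {N d : ℕ}
    (a : MvPolynomial (Fin N) ℤ_[p]) (ha : IsElliptic p N a d)
    (β T : ℝ) (hβ : 0 < β)
    (μ : Measure (Fin N → ℚ_[p])) [μ.Regular]
    (hmom : ∫⁻ ξ, ENNReal.ofReal (‖ξ‖ ^ ((d : ℝ) * β)) ∂μ < ⊤) :
    Tendsto (fun h : ℝ =>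
        ∫⁻ t in Set.Ioc (0 : ℝ) T, ∫⁻ ξ, ENNReal.ofReal
          (⨆ r ∈ {r : ℝ | r ∈ Set.Icc (0 : ℝ) T ∧ |r - t| < h},
            |Real.exp (-(r * ‖evalPoly p N a ξ‖ ^ β)) -
              Real.exp (-(t * ‖evalPoly p N a ξ‖ ^ β))| ^ 2) ∂μ)
      (nhdsWithin 0 (Set.Ioi 0)) (nhds 0) ∧
    (∫⁻ t in Set.Ioc (0 : ℝ) T,
        ∫⁻ ξ, ENNReal.ofReal (Real.exp (-(2 * t * ‖evalPoly p N a ξ‖ ^ β))) ∂μ < ⊤) := by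
  have hpoly := norm_evalPoly_rpow_le ha.2.1 hβ.le
  have : IsFiniteMeasure μ := isFiniteMeasure_of_lintegral_norm_rpow_lt_top (by positivity) hmom
  refine ⟨tendsto_nhdsGT_zero_of_le_ofReal_mul (C := _ * ENNReal.ofReal T)
    (ENNReal.mul_ne_top hmom.ne ENNReal.ofReal_ne_top) ?_, ?_⟩
  · filter_upwards [self_mem_nhdsWithin] with h (hh : 0 < h)
    calc _ ≤ ∫⁻ _ in Ioc (0 : ℝ) T,
            ∫⁻ ξ, ENNReal.ofReal h * ENNReal.ofReal (‖ξ‖ ^ ((d : ℝ) * β)) ∂μ :=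
          setLIntegral_mono measurable_const fun t ht => lintegral_mono fun ξ => by
            rw [← ENNReal.ofReal_mul hh.le]
            exact ENNReal.ofReal_le_ofReal ((iSup_sq_abs_exp_neg_mul_sub_le (by positivity)
              ht.1.le hh.le).trans (mul_le_mul_of_nonneg_left (hpoly ξ) hh.le))
      _ = _ := by
        rw [lintegral_const_mul' _ _ ENNReal.ofReal_ne_top, setLIntegral_const, Real.volume_Ioc,
          sub_zero, mul_assoc]
  · calc _ ≤ ∫⁻ _ in Ioc (0 : ℝ) T, μ univ :=
          setLIntegral_mono measurable_const fun t ht => by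
            have ht0 : 0 ≤ t := ht.1.le
            refine (lintegral_mono fun ξ => ENNReal.ofReal_le_one.mpr
              (Real.exp_le_one_iff.mpr (neg_nonpos.mpr ?_))).trans_eq lintegral_one
            positivity
      _ < ⊤ := by
        rw [setLIntegral_const, Real.volume_Ioc]
        exact ENNReal.mul_lt_top (measure_lt_top μ _) ENNReal.ofReal_lt_top

/-- If `∫ ‖ξ‖_p^{dβ} dμ(ξ) < ∞` then Hypothesis B holds for the heat
kernel, i.e. the modulus-of-continuity integral of `FΓ` tends to `0`, and moreover
`∫₀^T ∫ |FΓ(t)(ξ)|² dμ(ξ) dt < ∞`. -/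
theorem hypothesis_B_of_moment {p : ℕ} [Fact p.Prime] {N d : ℕ}
    (a : MvPolynomial (Fin N) ℤ_[p]) (ha : IsElliptic p N a d)
    (β T : ℝ) (hβ : 0 < β) (hT : 0 < T)
    (μ : Measure (Fin N → ℚ_[p])) [μ.Regular]
    (hmom : ∫⁻ ξ, ENNReal.ofReal (‖ξ‖ ^ ((d : ℝ) * β)) ∂μ < ⊤) :
    Tendsto (fun h : ℝ =>
        ∫⁻ t in Set.Ioc (0 : ℝ) T, ∫⁻ ξ, ENNReal.ofReal
          (⨆ r ∈ {r : ℝ | r ∈ Set.Icc (0 : ℝ) T ∧ |r - t| < h},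
            |Real.exp (-(r * ‖evalPoly p N a ξ‖ ^ β)) -
              Real.exp (-(t * ‖evalPoly p N a ξ‖ ^ β))| ^ 2) ∂μ)
      (nhdsWithin 0 (Set.Ioi 0)) (nhds 0) ∧
    (∫⁻ t in Set.Ioc (0 : ℝ) T,
        ∫⁻ ξ, ENNReal.ofReal (Real.exp (-(2 * t * ‖evalPoly p N a ξ‖ ^ β))) ∂μ < ⊤) :=
  hypothesis_B_of_moment_general a ha β T hβ μ hmom
end
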